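/- arXiv:1301.6842 — 2 statements merged into one kernel-verified Lean document; each statement's English description precedes it below -/
import Mathlib

section
/- Let h : [0,∞) → (0,∞) be a continuous function such that liminf_{t→∞} (log h(t))/t > 0. Then liminf_{t→∞} ( ∫_0^t h(s) ds ) / h(t) < ∞. -/
open MeasureTheory Filter

/-- If `h : [0,∞) → (0,∞)` is continuous with `liminf_{t→∞} (log h(t))/t > 0`, then
`liminf_{t→∞} (∫_0^t h(s) ds) / h(t) < ∞`. -/
theorem stmt_1 (h : ℝ → ℝ)
    (hcont : ContinuousOn h (Set.Ici 0))
    (hpos : ∀ t ∈ Set.Ici (0:ℝ), 0 < h t)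
    (hgrowth : (0 : EReal) <
      Filter.liminf (fun t => ((Real.log (h t) / t : ℝ) : EReal)) Filter.atTop) :
    Filter.liminf (fun t => (((∫ s in (0:ℝ)..t, h s) / h t : ℝ) : EReal)) Filter.atTop < ⊤ := by
  by_contra hcon
  push_neg at hcon
  have hlim : Filter.liminf
      (fun t => (((∫ s in (0:ℝ)..t, h s) / h t : ℝ) : EReal)) Filter.atTop = ⊤ :=
    top_le_iff.mp hcon
  set F : ℝ → ℝ := fun t => ∫ s in (0:ℝ)..t, h s with hFdef
  -- pick 0 < c < liminf
  obtain ⟨c, hc0, hcL⟩ := EReal.lt_iff_exists_real_btwn.mp hgrowth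
  have hc0' : (0:ℝ) < c := by exact_mod_cast hc0
  set K : ℝ := 2 / c with hKdef
  have hK0 : 0 < K := by positivity
  have hKinv : 1 / K = c / 2 := one_div_div 2 c
  have hbdd : ∀ u : ℝ → ℝ, Filter.IsBoundedUnder (· ≥ ·) atTop (fun t => ((u t : ℝ) : EReal)) :=
    fun u => ⟨⊥, Filter.eventually_map.2 (Filter.Eventually.of_forall fun _ => bot_le)⟩
  have hev1 : ∀ᶠ t in atTop, (c : EReal) < ((Real.log (h t) / t : ℝ) : EReal) :=
    eventually_lt_of_lt_liminf hcL (hbdd _)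
  have hev2 : ∀ᶠ t in atTop, (K : EReal) < ((F t / h t : ℝ) : EReal) := by
    refine eventually_lt_of_lt_liminf ?_ (hbdd _)
    rw [hlim]
    exact EReal.coe_lt_top K
  obtain ⟨T₀, hT₀⟩ := eventually_atTop.mp (hev1.and hev2)
  set T : ℝ := max T₀ 1 with hTdef
  have hT1 : (1:ℝ) ≤ T := le_max_right _ _
  have hT0 : (0:ℝ) < T := lt_of_lt_of_le one_pos hT1
  have key : ∀ t, T ≤ t → c < Real.log (h t) / t ∧ K < F t / h t := by
    intro t ht
    have := hT₀ t (le_trans (le_max_left _ _) ht)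
    exact ⟨by exact_mod_cast this.1, by exact_mod_cast this.2⟩
  have hpt : ∀ t, T ≤ t → 0 < h t := fun t ht => hpos t (by simp; linarith)
  have hhF : ∀ t, T ≤ t → K * h t < F t := by
    intro t ht
    exact (lt_div_iff₀ (hpt t ht)).mp (key t ht).2
  have hFpos : ∀ t, T ≤ t → 0 < F t := by
    intro t ht
    have := hhF t ht
    nlinarith [hpt t ht]
  -- derivative of F
  have hderiv : ∀ x : ℝ, 0 < x → HasDerivAt F (h x) x := by
    intro x hx
    have hxc : ContinuousAt h x := hcont.continuousAt (Ici_mem_nhds hx)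
    have hint : IntervalIntegrable h volume 0 x := by
      apply ContinuousOn.intervalIntegrable
      apply hcont.mono
      rw [Set.uIcc_of_le hx.le]
      exact Set.Icc_subset_Ici_self
    have hmeas : StronglyMeasurableAtFilter h (nhds x) volume := by
      refine ContinuousOn.stronglyMeasurableAtFilter isOpen_Ioi
        (hcont.mono fun y hy => le_of_lt hy) x hx
    exact intervalIntegral.integral_hasDerivAt_right hint hmeas hxc
  -- Gronwall
  have gron : ∀ t, T ≤ t → F t ≤ F T * Real.exp ((1/K) * (t - T)) := by
    intro t ht
    have h1 := norm_le_gronwallBound_of_norm_deriv_right_le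
      (f := F) (f' := h) (δ := F T) (K := 1/K) (ε := 0) (a := T) (b := t)
      (fun x hx => ((hderiv x (by linarith [hx.1])).continuousAt).continuousWithinAt)
      (fun x hx => (hderiv x (by linarith [hx.1])).hasDerivWithinAt)
      (le_of_eq (by rw [Real.norm_eq_abs, abs_of_pos (hFpos T le_rfl)]))
      ?_ t ⟨ht, le_rfl⟩
    · rwa [gronwallBound_ε0, Real.norm_eq_abs, abs_of_pos (hFpos t ht)] at h1
    · intro x hx
      have hx' : T ≤ x := hx.1
      have h2 := hhF x hx'
      have h3 := hpt x hx'
      have h4 := hFpos x hx'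
      rw [Real.norm_eq_abs, Real.norm_eq_abs, abs_of_pos h3, abs_of_pos h4,
        add_zero, one_div, inv_mul_eq_div, le_div_iff₀ hK0]
      nlinarith
  -- final contradiction
  set A : ℝ := Real.log (F T / K) with hAdef
  have hbound : ∀ t, T ≤ t → c * t < A + (c/2) * t := by
    intro t ht
    have ht0 : 0 < t := lt_of_lt_of_le hT0 ht
    have h1 : c * t < Real.log (h t) := (lt_div_iff₀ ht0).mp (key t ht).1
    have h2 : h t ≤ (F T / K) * Real.exp ((1/K) * (t - T)) := by
      have := hhF t ht
      have := gron t ht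
      rw [div_mul_eq_mul_div, le_div_iff₀ hK0]
      nlinarith [hpt t ht]
    have hFTK : 0 < F T / K := div_pos (hFpos T le_rfl) hK0
    have h3 : Real.log (h t) ≤ A + (1/K) * (t - T) := by
      calc Real.log (h t) ≤ Real.log ((F T / K) * Real.exp ((1/K) * (t - T))) := by
            apply Real.log_le_log (hpt t ht) h2
        _ = A + (1/K) * (t - T) := by
            rw [Real.log_mul (ne_of_gt hFTK) (Real.exp_ne_zero _), Real.log_exp]
    have h4 : (1/K) * (t - T) ≤ (c/2) * t := by
      rw [hKinv]
      nlinarith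
    linarith
  obtain ⟨t, ht1, ht2⟩ : ∃ t, T ≤ t ∧ 2 * A / c + 1 ≤ t :=
    ⟨max T (2 * A / c + 1), le_max_left _ _, le_max_right _ _⟩
  have := hbound t ht1
  have h5 : c * (2 * A / c) = 2 * A := by field_simp
  nlinarith
end

section
/- Let (Ω, F, (F_t)_{t≥0}, P) be a filtered probability space and (Y_t)_{t≥0} a nonnegative, adapted process with right-continuous paths and each Y_t integrable. Suppose there exist constants T > 0, a ∈ (0,1] and γ ∈ ℝ such that for every u ≥ 0 and all 0 ≤ s < t ≤ T, E[ e^{γ(u+t)} Y_{u+t} | F_{u+s} ] ≥ a · e^{γ(u+s)} Y_{u+s} almost surely. Let λ ∈ ℝ satisfy γ ≥ −λ and limsup_{t→∞} (1/t)·log E[Y_t] < λ. Then P( lim_{t→∞} e^{−λt} Y_t = 0 ) = 1. -/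
/-!
Weight the process as `M t = e^{γ t} Y t`. On a window `[u, u + T)` every `a • M_t` lies below
the martingale `E[M_{u+T} | ℱ_t]`, so Doob's maximal inequality bounds
`P(sup_{[u, u+T)} M ≥ α)` by `(a α)⁻¹ E[M_{u+T}]` along the dyadic grids of the window, and
right continuity passes from the grids to the whole window. Since `E[M_t]` grows at rate
`λ' + γ < λ + γ`, choosing thresholds `α_n = e^{c u_n}` with `λ' + γ < c < λ + γ` on the windows
`u_n = u_0 + n T` makes these probabilities summable. By Borel–Cantelli, almost surely
`M ≤ α_n` on all but finitely many windows, and then `e^{-λ t} Y t = e^{-(λ + γ) t} M t` decays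
exponentially because `λ + γ ≥ 0`.
-/

open MeasureTheory Filter Set Real Topology

theorem exists_nat_mul_mem_Ico {x h : ℝ} (hx : 0 ≤ x) (hh : 0 < h) :
    ∃ j : ℕ, (j : ℝ) * h ∈ Ico x (x + h) := by
  refine ⟨⌈x / h⌉₊, ?_, ?_⟩
  · exact (div_le_iff₀ hh).1 (Nat.le_ceil _)
  · have := Nat.ceil_lt_add_one (div_nonneg hx hh.le)
    rwa [← lt_div_iff₀ hh, add_div, div_self hh.ne']

theorem exists_dyadic_mem_Ico {u T t v : ℝ} (hT : 0 < T) (ht : t ∈ Ico u (u + T)) (htv : t < v) :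
    ∃ k j : ℕ, j < 2 ^ k ∧ u + j * (T / 2 ^ k) ∈ Ico t v := by
  obtain ⟨k, hk⟩ : ∃ k : ℕ, T / 2 ^ k < min (v - t) (u + T - t) := by
    have : Tendsto (fun k : ℕ => T / 2 ^ k) atTop (𝓝 0) :=
      tendsto_const_nhds.div_atTop (tendsto_pow_atTop_atTop_of_one_lt one_lt_two)
    exact (this.eventually (gt_mem_nhds (lt_min (by linarith) (by linarith [ht.2])))).exists
  obtain ⟨j, hj₁, hj₂⟩ := exists_nat_mul_mem_Ico (sub_nonneg.2 ht.1) (by positivity : 0 < T / 2 ^ k)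
  have hjT : (j : ℝ) * (T / 2 ^ k) < T := by linarith [min_le_right (v - t) (u + T - t)]
  refine ⟨k, j, ?_, by linarith, by linarith [min_le_left (v - t) (u + T - t)]⟩
  rw [mul_div_assoc', div_lt_iff₀ (by positivity), mul_comm] at hjT
  exact_mod_cast lt_of_mul_lt_mul_left hjT hT.le

theorem exists_lt_eventually_le_exp_of_limsup_lt {f : ℝ → ℝ} {lam : ℝ}
    (h : limsup (fun t => ((log (f t) / t : ℝ) : EReal)) atTop < lam) :
    ∃ lam' < lam, ∀ᶠ t in atTop, f t ≤ exp (lam' * t) := by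
  obtain ⟨lam', h₁, h₂⟩ := EReal.lt_iff_exists_real_btwn.1 h
  refine ⟨lam', EReal.coe_lt_coe_iff.1 h₂, ?_⟩
  filter_upwards [eventually_lt_of_limsup_lt h₁, eventually_gt_atTop 0] with t ht ht0
  rcases le_or_gt (f t) 0 with hf | hf
  · exact hf.trans (exp_pos _).le
  · rw [EReal.coe_lt_coe_iff, div_lt_iff₀ ht0, log_lt_iff_lt_exp hf] at ht
    exact ht.le

theorem summable_inv_exp_mul_of_le_exp {f : ℝ → ℝ} {t₀ T b c : ℝ} (hf0 : ∀ t, 0 ≤ f t)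
    (hbc : b < c) (hT : 0 < T) (hf : ∀ t ≥ t₀, f t ≤ exp (b * t)) :
    Summable fun n : ℕ => (exp (c * (t₀ + n * T)))⁻¹ * f (t₀ + n * T + T) := by
  refine Summable.of_nonneg_of_le (fun n => by have := hf0 (t₀ + n * T + T); positivity)
    (fun n => ?_) ((summable_exp_nat_mul_iff.2 (by nlinarith : (b - c) * T < 0)).mul_left
      (exp (b * T + (b - c) * t₀)))
  have hn : t₀ ≤ t₀ + n * T + T := by
    have : (0 : ℝ) ≤ n * T := by positivity
    linarith
  calc (exp (c * (t₀ + n * T)))⁻¹ * f (t₀ + n * T + T)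
      ≤ (exp (c * (t₀ + n * T)))⁻¹ * exp (b * (t₀ + n * T + T)) := by
        gcongr; exact hf _ hn
    _ = exp (b * T + (b - c) * t₀) * exp (n * ((b - c) * T)) := by
        rw [← exp_neg, ← exp_add, ← exp_add]; ring_nf

theorem tendsto_exp_mul_of_eventually_forall_Ico_le {y : ℝ → ℝ} (hy : ∀ t, 0 ≤ y t)
    {t₀ T b c : ℝ} (hT : 0 < T) (hb : 0 ≤ b) (hcb : c < b)
    (h : ∀ᶠ n : ℕ in atTop, ∀ t ∈ Ico (t₀ + n * T) (t₀ + n * T + T),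
      y t ≤ exp (c * (t₀ + n * T))) :
    Tendsto (fun t => exp (-b * t) * y t) atTop (𝓝 0) := by
  obtain ⟨N, hN⟩ := eventually_atTop.1 h
  have hlim : Tendsto (fun t => exp ((c - b) * (t - T))) atTop (𝓝 0) :=
    tendsto_exp_atBot.comp <|
      (tendsto_atTop_add_const_right _ (-T) tendsto_id).const_mul_atTop_of_neg (sub_neg.2 hcb)
  refine squeeze_zero' (Eventually.of_forall fun t => mul_nonneg (exp_pos _).le (hy t)) ?_ hlim
  filter_upwards [eventually_ge_atTop (t₀ + N * T)] with t ht
  set n := ⌊(t - t₀) / T⌋₊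
  have hNT : (0 : ℝ) ≤ N * T := by positivity
  have hn : (n : ℝ) * T ≤ t - t₀ :=
    (le_div_iff₀ hT).1 (Nat.floor_le (div_nonneg (by linarith) hT.le))
  have hn' : t - t₀ < n * T + T := by
    have := Nat.lt_floor_add_one ((t - t₀) / T)
    rwa [div_lt_iff₀ hT, add_mul, one_mul] at this
  have hNn : N ≤ n := Nat.le_floor ((le_div_iff₀ hT).2 (by linarith))
  calc exp (-b * t) * y t ≤ exp (-b * (t₀ + n * T)) * exp (c * (t₀ + n * T)) :=
        mul_le_mul (exp_le_exp.2 (by nlinarith)) (hN n hNn t ⟨by linarith, by linarith⟩)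
          (hy t) (exp_pos _).le
    _ = exp ((c - b) * (t₀ + n * T)) := by rw [← exp_add]; ring_nf
    _ ≤ exp ((c - b) * (t - T)) := exp_le_exp.2 (by nlinarith)

namespace MeasureTheory

variable {Ω : Type*} {m : MeasurableSpace Ω} {P : Measure Ω}

def Filtration.precomp {ι κ : Type*} [Preorder ι] [Preorder κ] (ℱ : Filtration ι m) {s : κ → ι}
    (hs : Monotone s) : Filtration κ m where
  seq i := ℱ (s i)
  mono' _ _ hij := ℱ.mono (hs hij)
  le' i := ℱ.le (s i)

theorem maximal_ineq_of_mul_le_condExp [IsFiniteMeasure P] (𝒢 : Filtration ℕ m)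
    {M : ℕ → Ω → ℝ} {Z : Ω → ℝ} (hZ : 0 ≤ᵐ[P] Z) {a α : ℝ} (ha : 0 < a) (hα : 0 < α) {k : ℕ}
    (hM : ∀ i ≤ k, ∀ᵐ ω ∂P, a * M i ω ≤ P[Z | 𝒢 i] ω) :
    P {ω | ∃ i ≤ k, α ≤ M i ω} ≤ ENNReal.ofReal ((a * α)⁻¹ * ∫ ω, Z ω ∂P) := by
  set N : ℕ → Ω → ℝ := fun i => (P[Z | 𝒢 i])⁺
  set ε : NNReal := (a * α).toNNReal
  have hε : (ε : ℝ) = a * α := Real.coe_toNNReal _ (by positivity)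
  have hM' : ∀ᵐ ω ∂P, ∀ i ∈ Iic k, a * M i ω ≤ P[Z | 𝒢 i] ω :=
    (eventually_all_finite (finite_Iic k)).2 hM
  have hsub : {ω | ∃ i ≤ k, α ≤ M i ω} ≤ᵐ[P]
      {ω | (ε : ℝ) ≤ (Finset.range (k + 1)).sup' Finset.nonempty_range_add_one fun i => N i ω} := by
    filter_upwards [hM'] with ω hω ⟨i, hik, hi⟩
    refine le_trans ?_ (Finset.le_sup' (fun i => N i ω) (Finset.mem_range_succ_iff.2 hik))
    calc (ε : ℝ) = a * α := hε
      _ ≤ a * M i ω := by gcongr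
      _ ≤ P[Z | 𝒢 i] ω := hω i hik
      _ ≤ N i ω := le_sup_left
  have hdoob := maximal_ineq (martingale_condExp Z 𝒢 P).submartingale.pos
    (fun i ω => le_sup_right (a := P[Z | 𝒢 i] ω)) (ε := ε) k
  have hNk : ∫ ω, N k ω ∂P = ∫ ω, Z ω ∂P := by
    refine (integral_congr_ae ?_).trans (integral_condExp (𝒢.le k))
    filter_upwards [condExp_nonneg (m := 𝒢 k) hZ] with ω hω
    exact max_eq_left hω
  have hbound : (ε : ENNReal) * P {ω | ∃ i ≤ k, α ≤ M i ω} ≤ ENNReal.ofReal (∫ ω, Z ω ∂P) :=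
    calc (ε : ENNReal) * P {ω | ∃ i ≤ k, α ≤ M i ω}
        ≤ ε * P {ω | (ε : ℝ) ≤ (Finset.range (k + 1)).sup' Finset.nonempty_range_add_one
            fun i => N i ω} := by gcongr _ * ?_; exact measure_mono_ae hsub
      _ ≤ ENNReal.ofReal (∫ ω in {ω | (ε : ℝ) ≤ (Finset.range (k + 1)).sup'
            Finset.nonempty_range_add_one fun i => N i ω}, N k ω ∂P) := hdoob
      _ ≤ ENNReal.ofReal (∫ ω, N k ω ∂P) := by
          refine ENNReal.ofReal_le_ofReal (setIntegral_le_integral ?_ ?_)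
          · exact (integrable_condExp (f := Z) (m := 𝒢 k)).pos_part
          · exact Eventually.of_forall fun ω => le_sup_right
      _ = ENNReal.ofReal (∫ ω, Z ω ∂P) := by rw [hNk]
  have hε0 : (ε : ENNReal) ≠ 0 := by simpa [ε] using mul_pos ha hα
  rw [mul_comm, ← ENNReal.le_div_iff_mul_le (Or.inl hε0) (Or.inl ENNReal.coe_ne_top)] at hbound
  refine hbound.trans_eq ?_
  rw [inv_mul_eq_div, ENNReal.ofReal_div_of_pos (mul_pos ha hα)]
  rfl

theorem maximal_ineq_Ico_of_mul_le_condExp [IsFiniteMeasure P] (ℱ : Filtration ℝ m)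
    {M : ℝ → Ω → ℝ} {Z : Ω → ℝ} (hZ : 0 ≤ᵐ[P] Z) {a α u T : ℝ} (ha : 0 < a) (hα : 0 < α)
    (hT : 0 < T) (hrc : ∀ ω, ∀ t, ContinuousWithinAt (fun s => M s ω) (Ici t) t)
    (hM : ∀ t ∈ Ico u (u + T), ∀ᵐ ω ∂P, a * M t ω ≤ P[Z | ℱ t] ω) :
    P {ω | ∃ t ∈ Ico u (u + T), α < M t ω} ≤ ENNReal.ofReal ((a * α)⁻¹ * ∫ ω, Z ω ∂P) := by
  set grid : ℕ → ℕ → ℝ := fun k j => u + j * (T / 2 ^ k)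
  have hgrid_mono (k : ℕ) : Monotone (grid k) := fun i j hij => by
    simp only [grid]; gcongr
  have hgrid_mem {k j : ℕ} (hj : j ≤ 2 ^ k - 1) : grid k j ∈ Ico u (u + T) := by
    have hj' : (j : ℝ) < 2 ^ k := by
      exact_mod_cast (show j < 2 ^ k by have := Nat.one_le_two_pow (n := k); omega)
    have hjT : (j : ℝ) * (T / 2 ^ k) < T :=
      calc (j : ℝ) * (T / 2 ^ k) < 2 ^ k * (T / 2 ^ k) := by gcongr
        _ = T := mul_div_cancel₀ T (by positivity)
    exact ⟨le_add_of_nonneg_right (by positivity), by simp only [grid]; linarith⟩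
  set E : ℕ → Set Ω := fun k => {ω | ∃ j ≤ 2 ^ k - 1, α ≤ M (grid k j) ω}
  have hE_mono : Monotone E := by
    refine monotone_nat_of_le_succ fun k ω ⟨j, hj, hjω⟩ => ⟨2 * j, by rw [pow_succ]; omega, ?_⟩
    have hgrid : grid (k + 1) (2 * j) = grid k j := by
      simp only [grid]; push_cast; rw [pow_succ]; field_simp
    rwa [hgrid]
  have hE (k : ℕ) : P (E k) ≤ ENNReal.ofReal ((a * α)⁻¹ * ∫ ω, Z ω ∂P) :=
    maximal_ineq_of_mul_le_condExp (ℱ.precomp (hgrid_mono k)) hZ ha hα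
      fun j hj => hM _ (hgrid_mem hj)
  have hsub : {ω | ∃ t ∈ Ico u (u + T), α < M t ω} ⊆ ⋃ k, E k := by
    rintro ω ⟨t, ht, hαt⟩
    obtain ⟨v, htv, hv⟩ := mem_nhdsGE_iff_exists_Ico_subset.1
      ((hrc ω t).eventually (lt_mem_nhds hαt))
    obtain ⟨k, j, hj, hjv⟩ := exists_dyadic_mem_Ico hT ht htv
    exact mem_iUnion.2 ⟨k, j, by omega, (hv hjv).le⟩
  calc P {ω | ∃ t ∈ Ico u (u + T), α < M t ω} ≤ P (⋃ k, E k) := measure_mono hsub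
    _ = ⨆ k, P (E k) := hE_mono.measure_iUnion
    _ ≤ _ := iSup_le hE

theorem ae_eventually_forall_Ico_le_of_summable [IsFiniteMeasure P] (ℱ : Filtration ℝ m)
    {M : ℝ → Ω → ℝ} {Z : ℕ → Ω → ℝ} {a T : ℝ} {u α : ℕ → ℝ} (ha : 0 < a) (hT : 0 < T)
    (hα : ∀ n, 0 < α n) (hrc : ∀ ω, ∀ t, ContinuousWithinAt (fun s => M s ω) (Ici t) t)
    (hZ : ∀ n, 0 ≤ᵐ[P] Z n)
    (hM : ∀ n, ∀ t ∈ Ico (u n) (u n + T), ∀ᵐ ω ∂P, a * M t ω ≤ P[Z n | ℱ t] ω)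
    (hsum : Summable fun n => (α n)⁻¹ * ∫ ω, Z n ω ∂P) :
    ∀ᵐ ω ∂P, ∀ᶠ n in atTop, ∀ t ∈ Ico (u n) (u n + T), M t ω ≤ α n := by
  have hbound (n : ℕ) :
      (a * α n)⁻¹ * ∫ ω, Z n ω ∂P = a⁻¹ * ((α n)⁻¹ * ∫ ω, Z n ω ∂P) := by
    rw [mul_inv, mul_assoc]
  have htsum : ∑' n, P {ω | ∃ t ∈ Ico (u n) (u n + T), α n < M t ω} ≠ ⊤ := by
    refine ne_top_of_le_ne_top ENNReal.ofReal_ne_top (calc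
      _ ≤ ∑' n, ENNReal.ofReal ((a * α n)⁻¹ * ∫ ω, Z n ω ∂P) := ENNReal.tsum_le_tsum fun n =>
          maximal_ineq_Ico_of_mul_le_condExp ℱ (hZ n) ha (hα n) hT hrc (hM n)
      _ = _ := by
          simp only [hbound]
          exact (ENNReal.ofReal_tsum_of_nonneg (fun n => by
            have := integral_nonneg_of_ae (hZ n); have := hα n; positivity)
            (hsum.mul_left a⁻¹)).symm)
  filter_upwards [ae_eventually_notMem htsum] with ω hω
  filter_upwards [hω] with n hn t ht
  exact not_lt.1 fun h => hn ⟨t, ht, h⟩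

end MeasureTheory

theorem stmt_3_general {Ω : Type*} {m : MeasurableSpace Ω} {P : Measure Ω} [IsProbabilityMeasure P]
    (ℱ : Filtration ℝ m) (Y : ℝ → Ω → ℝ)
    (hrc : ∀ ω, ∀ t : ℝ, ContinuousWithinAt (fun s => Y s ω) (Set.Ici t) t)
    (hnonneg : ∀ t ω, 0 ≤ Y t ω)
    (T a γ : ℝ) (hT : 0 < T) (ha0 : 0 < a)
    (hineq : ∀ u : ℝ, 0 ≤ u → ∀ s t : ℝ, 0 ≤ s → s < t → t ≤ T →
      ∀ᵐ ω ∂P, a * (Real.exp (γ * (u + s)) * Y (u + s) ω) ≤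
        (P[fun ω' => Real.exp (γ * (u + t)) * Y (u + t) ω' | ℱ (u + s)]) ω)
    (lam : ℝ) (hγ : -lam ≤ γ)
    (hgrowth : Filter.limsup
        (fun t => ((Real.log (∫ ω, Y t ω ∂P) / t : ℝ) : EReal)) Filter.atTop
      < (lam : EReal)) :
    ∀ᵐ ω ∂P, Filter.Tendsto (fun t => Real.exp (-lam * t) * Y t ω) Filter.atTop (nhds 0) := by
  obtain ⟨lam', hlam', hmean⟩ := exists_lt_eventually_le_exp_of_limsup_lt hgrowth
  obtain ⟨t₀, ht₀⟩ := eventually_atTop.1 hmean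
  obtain ⟨c, hc', hc⟩ := exists_between (show lam' + γ < lam + γ by linarith)
  set M : ℝ → Ω → ℝ := fun t ω => exp (γ * t) * Y t ω
  set u : ℕ → ℝ := fun n => max t₀ 0 + n * T
  have hM0 (t : ℝ) (ω : Ω) : 0 ≤ M t ω := mul_nonneg (exp_pos _).le (hnonneg t ω)
  have hMrc (ω : Ω) (t : ℝ) : ContinuousWithinAt (fun s => M s ω) (Ici t) t :=
    (continuous_exp.comp (continuous_const_mul γ)).continuousWithinAt.mul (hrc ω t)
  have hsub (n : ℕ) (t : ℝ) (ht : t ∈ Ico (u n) (u n + T)) :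
      ∀ᵐ ω ∂P, a * M t ω ≤ P[M (u n + T) | ℱ t] ω := by
    simpa only [add_sub_cancel] using
      hineq (u n) (by positivity) (t - u n) T (sub_nonneg.2 ht.1) (by linarith [ht.2]) le_rfl
  have hmeanM (t : ℝ) (ht : t ≥ max t₀ 0) : ∫ ω, M t ω ∂P ≤ exp ((lam' + γ) * t) := by
    rw [integral_const_mul, add_mul, exp_add, mul_comm]
    exact mul_le_mul_of_nonneg_right (ht₀ t (le_of_max_le_left ht)) (exp_pos _).le
  have hwindow := ae_eventually_forall_Ico_le_of_summable ℱ (Z := fun n => M (u n + T))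
    (α := fun n => exp (c * u n)) ha0 hT (fun n => exp_pos _) hMrc
    (fun n => Eventually.of_forall (hM0 (u n + T))) hsub
    (summable_inv_exp_mul_of_le_exp (f := fun t => ∫ ω, M t ω ∂P)
      (fun t => integral_nonneg (hM0 t)) hc' hT hmeanM)
  filter_upwards [hwindow] with ω hω
  refine (tendsto_exp_mul_of_eventually_forall_Ico_le (y := (M · ω)) (t₀ := max t₀ 0)
    (hM0 · ω) hT (by linarith) hc hω).congr fun t => ?_
  rw [← mul_assoc, ← exp_add]
  ring_nf

/-- If a nonnegative, adapted, right-continuous, integrable process satisfies the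
approximate-submartingale property `E[e^{γ(u+t)} Y_{u+t} | F_{u+s}] ≥ a e^{γ(u+s)} Y_{u+s}`
on windows of length `T`, and `λ` satisfies `γ ≥ -λ` and
`limsup_{t→∞} (1/t) log E[Y_t] < λ`, then `e^{-λ t} Y_t → 0` a.s. -/
theorem stmt_3 {Ω : Type*} {m : MeasurableSpace Ω} {P : Measure Ω} [IsProbabilityMeasure P]
    (ℱ : Filtration ℝ m) (Y : ℝ → Ω → ℝ)
    (hadapted : Adapted ℱ Y)
    (hrc : ∀ ω, ∀ t : ℝ, ContinuousWithinAt (fun s => Y s ω) (Set.Ici t) t)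
    (hnonneg : ∀ t ω, 0 ≤ Y t ω)
    (hint : ∀ t, Integrable (Y t) P)
    (T a γ : ℝ) (hT : 0 < T) (ha0 : 0 < a) (ha1 : a ≤ 1)
    (hineq : ∀ u : ℝ, 0 ≤ u → ∀ s t : ℝ, 0 ≤ s → s < t → t ≤ T →
      ∀ᵐ ω ∂P, a * (Real.exp (γ * (u + s)) * Y (u + s) ω) ≤
        (P[fun ω' => Real.exp (γ * (u + t)) * Y (u + t) ω' | ℱ (u + s)]) ω)
    (lam : ℝ) (hγ : -lam ≤ γ)
    (hgrowth : Filter.limsup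
        (fun t => ((Real.log (∫ ω, Y t ω ∂P) / t : ℝ) : EReal)) Filter.atTop
      < (lam : EReal)) :
    ∀ᵐ ω ∂P, Filter.Tendsto (fun t => Real.exp (-lam * t) * Y t ω) Filter.atTop (nhds 0) :=
  stmt_3_general ℱ Y hrc hnonneg T a γ hT ha0 hineq lam hγ hgrowth
end
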